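/- arXiv:1807.04627 — 2 statements merged into one kernel-verified Lean document; each statement's English description precedes it below -/
import Mathlib

section
/- For a > 0, the function u_2(x,y) = (1/(12a))·(−6x²y + 6ax² + y⁴ − 2ay³ + 2a³y − a⁴) satisfies y·(u_2)_xx + (u_2)_yy = 0, u_2(x,−a) = x², and u_2(x,a) = 0 for all real x. -/
open Polynomial

theorem deriv_deriv_polynomial_eval (p : ℝ[X]) :
    deriv (deriv fun x => p.eval x) = fun x => (derivative (derivative p)).eval x := by
  ext x
  simp only [funext fun y => Polynomial.deriv p (x := y), Polynomial.deriv]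

theorem tricomi_mixed_dirichlet_u2 (a : ℝ) (ha : 0 < a)
    (u : ℝ → ℝ → ℝ)
    (hu : ∀ x y : ℝ, u x y =
      (1/(12*a)) * (-6*x^2*y + 6*a*x^2 + y^4 - 2*a*y^3 + 2*a^3*y - a^4)) :
    (∀ x y : ℝ,
      y * deriv (deriv (fun x' => u x' y)) x + deriv (deriv (fun y' => u x y')) y = 0)
    ∧ (∀ x : ℝ, u x (-a) = x^2) ∧ (∀ x : ℝ, u x a = 0) := by
  refine ⟨fun x y => ?_, fun x => ?_, fun x => ?_⟩
  · have slice_x : (fun x' => u x' y) = fun x' =>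
        (C ((a - y) / (2*a)) * X^2 + C ((y^4 - 2*a*y^3 + 2*a^3*y - a^4) / (12*a))).eval x' := by
      ext x'
      simp only [hu, eval_add, eval_mul, eval_C, eval_pow, eval_X]
      ring
    have slice_y : (fun y' => u x y') = fun y' =>
        (C (1 / (12*a)) * X^4 + C (-1/6) * X^3 + C ((a^3 - 3*x^2) / (6*a)) * X
          + C ((6*a*x^2 - a^4) / (12*a))).eval y' := by
      ext y'
      simp only [hu, eval_add, eval_mul, eval_C, eval_pow, eval_X]
      field_simp
      ring
    rw [slice_x, slice_y, deriv_deriv_polynomial_eval, deriv_deriv_polynomial_eval]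
    simp only [derivative_add, derivative_C_mul_X_pow, derivative_C_mul_X, derivative_C,
      add_zero, eval_add, eval_C, eval_mul, eval_pow, eval_X]
    field_simp
    ring
  · rw [hu]; field_simp; ring
  · rw [hu]; field_simp; ring
end

section
/- Let b > 0 and let P(x,y) be a polynomial in two real variables such that y·P_xx + P_yy = 0 for all (x,y), and P(x,0) = 0 and P(x,b) = 0 for all x ∈ ℝ. Then P is identically zero. -/
/-!
Write `P = ∑ₖ cₖ(y) xᵏ`. Comparing coefficients of `xᵏ`, the Tricomi equation reads
`cₖ'' + (k + 2)(k + 1) y cₖ₊₂ = 0`, and the boundary conditions say that every `cₖ` vanishes at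
`0` and at `b`. Going down from above the degree of `P` in `x`, `cₖ₊₂ = 0` makes `cₖ` affine with
two distinct roots, so `cₖ = 0` as well.
-/

open MvPolynomial

namespace Polynomial

theorem eq_zero_of_coeff_add_eq_zero_imp_coeff_eq_zero {R : Type*} [Semiring R] {p : R[X]}
    {n : ℕ} (hn : 0 < n) (h : ∀ k, p.coeff (k + n) = 0 → p.coeff k = 0) : p = 0 := by
  have hcoeff : ∀ m k, p.natDegree < k + m * n → p.coeff k = 0 := by
    intro m
    induction m with
    | zero => exact fun k hk => coeff_eq_zero_of_natDegree_lt (by simpa using hk)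
    | succ m ih => exact fun k hk => h k (ih (k + n) (by rw [add_mul] at hk; omega))
  ext k
  exact hcoeff (p.natDegree + 1) k (by nlinarith)

theorem eq_zero_of_derivative_derivative_eq_zero_of_eval_eq_zero {R : Type*} [CommRing R]
    [IsDomain R] [CharZero R] {p : R[X]} {a b : R} (hab : a ≠ b)
    (hp : derivative (derivative p) = 0) (ha : p.eval a = 0) (hb : p.eval b = 0) : p = 0 := by
  have hdeg : p.natDegree < 2 := by
    have := derivative_eq_zero.mp hp
    rw [natDegree_derivative] at this
    omega
  classical
  refine eq_zero_of_natDegree_lt_card_of_eval_eq_zero' p {a, b} ?_ ?_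
  · simp [ha, hb]
  · rwa [Finset.card_pair hab]

end Polynomial

namespace MvPolynomial

section CommSemiring

variable {R : Type*} [CommSemiring R]

/-- `p(x, y)` as a polynomial in `x = X 0` whose coefficients are polynomials in `y = X 1`. -/
noncomputable def finTwoEquivPolyPoly : MvPolynomial (Fin 2) R ≃ₐ[R] Polynomial (Polynomial R) :=
  (renameEquiv R (Equiv.swap 0 1)).trans (Polynomial.Bivariate.equivMvPolynomial R).symm

@[simp]
theorem finTwoEquivPolyPoly_X_zero :
    finTwoEquivPolyPoly (X 0 : MvPolynomial (Fin 2) R) = Polynomial.X := by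
  simp [finTwoEquivPolyPoly]

@[simp]
theorem finTwoEquivPolyPoly_X_one :
    finTwoEquivPolyPoly (X 1 : MvPolynomial (Fin 2) R) = Polynomial.C Polynomial.X := by
  simp [finTwoEquivPolyPoly]

@[simp]
theorem finTwoEquivPolyPoly_C (a : R) :
    finTwoEquivPolyPoly (C a) = Polynomial.C (Polynomial.C a) :=
  finTwoEquivPolyPoly.commutes a

theorem evalEval_finTwoEquivPolyPoly (x y : R) (p : MvPolynomial (Fin 2) R) :
    (finTwoEquivPolyPoly p).evalEval y x = eval ![x, y] p := by
  change ((Polynomial.evalEvalRingHom y x).comp (finTwoEquivPolyPoly (R := R)).toRingHom) p =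
    eval ![x, y] p
  congr 1
  ext i
  · simp
  · fin_cases i <;> simp

theorem rename_swap_pderiv (i : Fin 2) (p : MvPolynomial (Fin 2) R) :
    rename (Equiv.swap 0 1) (pderiv i p) =
      pderiv (Equiv.swap 0 1 i) (rename (Equiv.swap 0 1) p) :=
  (pderiv_rename (Equiv.injective _) i p).symm

theorem finTwoEquivPolyPoly_pderiv_zero (p : MvPolynomial (Fin 2) R) :
    finTwoEquivPolyPoly (pderiv 0 p) = Polynomial.derivative (finTwoEquivPolyPoly p) := by
  apply (Polynomial.Bivariate.equivMvPolynomial R).injective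
  simp [finTwoEquivPolyPoly, ← Polynomial.Bivariate.pderiv_one_equivMvPolynomial,
    rename_swap_pderiv]

end CommSemiring

section CommRing

variable {R : Type*} [CommRing R]

theorem coeff_finTwoEquivPolyPoly_pderiv_one (p : MvPolynomial (Fin 2) R) (k : ℕ) :
    (finTwoEquivPolyPoly (pderiv 1 p)).coeff k =
      Polynomial.derivative ((finTwoEquivPolyPoly p).coeff k) := by
  have h := Polynomial.Bivariate.pderiv_zero_equivMvPolynomial (finTwoEquivPolyPoly p)
  simp only [finTwoEquivPolyPoly, AlgEquiv.trans_apply, AlgEquiv.apply_symm_apply,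
    renameEquiv_apply] at h ⊢
  rw [rename_swap_pderiv]
  simp only [Equiv.swap_apply_right, h, AlgEquiv.symm_apply_apply]
  rfl

noncomputable def tricomi (p : MvPolynomial (Fin 2) R) : MvPolynomial (Fin 2) R :=
  X 1 * pderiv 0 (pderiv 0 p) + pderiv 1 (pderiv 1 p)

theorem coeff_finTwoEquivPolyPoly_tricomi (p : MvPolynomial (Fin 2) R) (k : ℕ) :
    (finTwoEquivPolyPoly (tricomi p)).coeff k =
      Polynomial.X * (finTwoEquivPolyPoly p).coeff (k + 2) * ((k + 2) * (k + 1) : Polynomial R) +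
        Polynomial.derivative (Polynomial.derivative ((finTwoEquivPolyPoly p).coeff k)) := by
  simp only [tricomi, map_add, map_mul, finTwoEquivPolyPoly_X_one, finTwoEquivPolyPoly_pderiv_zero,
    Polynomial.coeff_add, Polynomial.coeff_C_mul, Polynomial.coeff_derivative, Nat.cast_add,
    Nat.cast_one, coeff_finTwoEquivPolyPoly_pderiv_one, add_left_inj]
  ring

theorem eval_coeff_finTwoEquivPolyPoly_eq_zero [IsDomain R] [Infinite R]
    {p : MvPolynomial (Fin 2) R} {y : R} (hp : ∀ x, eval ![x, y] p = 0) (k : ℕ) :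
    ((finTwoEquivPolyPoly p).coeff k).eval y = 0 := by
  have h : (finTwoEquivPolyPoly p).map (Polynomial.evalRingHom y) = 0 :=
    Polynomial.funext fun x => by
      simp [Polynomial.map_evalRingHom_eval, evalEval_finTwoEquivPolyPoly, hp]
  simpa using congrArg (Polynomial.coeff · k) h

end CommRing

end MvPolynomial

/-- Uniqueness of polynomial solutions of the Dirichlet problem for the homogeneous
Tricomi equation in the strip `0 < y < b`. Here variable `0` is `x` and
variable `1` is `y`; `pderiv` is the formal partial derivative. -/
theorem tricomi_polynomial_uniqueness_elliptic (b : ℝ) (hb : 0 < b)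
    (P : MvPolynomial (Fin 2) ℝ)
    (hT : ∀ x y : ℝ,
      y * eval ![x, y] (pderiv 0 (pderiv 0 P)) + eval ![x, y] (pderiv 1 (pderiv 1 P)) = 0)
    (hbot : ∀ x : ℝ, eval ![x, 0] P = 0)
    (htop : ∀ x : ℝ, eval ![x, b] P = 0) :
    P = 0 := by
  have hP : tricomi P = 0 := MvPolynomial.funext fun g => by
    simpa [tricomi, show ![g 0, g 1] = g from List.ofFn_inj.mp rfl] using hT (g 0) (g 1)
  have hQ : finTwoEquivPolyPoly P = 0 := by
    refine Polynomial.eq_zero_of_coeff_add_eq_zero_imp_coeff_eq_zero two_pos fun k hk => ?_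
    refine Polynomial.eq_zero_of_derivative_derivative_eq_zero_of_eval_eq_zero hb.ne
      ?_ (eval_coeff_finTwoEquivPolyPoly_eq_zero hbot k)
      (eval_coeff_finTwoEquivPolyPoly_eq_zero htop k)
    simpa [hP, hk] using (coeff_finTwoEquivPolyPoly_tricomi P k).symm
  simpa using hQ
end
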